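/- Under the tilted measure P_{θ₁} (where the Xᵢ are i.i.d. with mean μ₁ = Ψ'(θ₁) > 0 and cumulant generating function θ ↦ Ψ(θ₁+θ) − Ψ(θ₁)), let t = ⌈b/μ₁ + b^{1/2} h(b)⌉ and T_b = inf{n : S_n ∉ [0,b)}. If r = μ₁² h(b) / (2 b^{1/2} sup_{0≤θ≤θ₁} Ψ''(θ)) satisfies r < θ₁ and μ₁ r − (sup_{0≤θ≤θ₁} Ψ''(θ)) r²/2 ≥ μ₁ r / 2, then P_{θ₁}(T_b > t) ≤ exp(−μ₁³ h(b)² / (8 sup_{0≤θ≤θ₁} Ψ''(θ))). -/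

import Mathlib

open MeasureTheory ProbabilityTheory Real Set

/-!
If `T_b > t` then `S_t ≤ b`, so the Chernoff bound with `e^{-r S_t}` gives
`P(T_b > t) ≤ exp (r b + t Ψ(θ₁ - r))`, the `Xᵢ` being independent with cumulant generating
function `Ψ(θ₁ + ·)` (recall `Ψ(θ₁) = 0`). A second-order Taylor expansion at `θ₁` with
`Ψ'' ≤ K` gives `Ψ(θ₁ - r) ≤ -μ₁ r + K r² / 2`, which is at most `-μ₁ r / 2 < 0` by the
choice of `r`. Hence `t` may be replaced by its lower bound `b / μ₁ + √b h(b)`, after which the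
value of `r` makes the exponent collapse to `-μ₁³ h(b)² / (8 K)`.
-/

theorem image_sub_le_mul_sub_of_hasDerivAt_le {f f' : ℝ → ℝ} {a b C : ℝ} (hab : a ≤ b)
    (hf : ∀ x ∈ Icc a b, HasDerivAt f (f' x) x) (hC : ∀ x ∈ Icc a b, f' x ≤ C) :
    f b - f a ≤ C * (b - a) := by
  refine (convex_Icc a b).image_sub_le_mul_sub_of_deriv_le
    (fun x hx ↦ (hf x hx).continuousAt.continuousWithinAt)
    (fun x hx ↦ (hf x (interior_subset hx)).differentiableAt.differentiableWithinAt)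
    (fun x hx ↦ ?_) a (left_mem_Icc.2 hab) b (right_mem_Icc.2 hab) hab
  rw [(hf x (interior_subset hx)).deriv]
  exact hC x (interior_subset hx)

theorem mul_sub_sub_sq_le_image_sub_of_hasDerivAt {f f' f'' : ℝ → ℝ} {a b K : ℝ} (hab : a ≤ b)
    (hf : ∀ x ∈ Icc a b, HasDerivAt f (f' x) x) (hf' : ∀ x ∈ Icc a b, HasDerivAt f' (f'' x) x)
    (hK : ∀ x ∈ Icc a b, f'' x ≤ K) :
    f' b * (b - a) - K * (b - a) ^ 2 / 2 ≤ f b - f a := by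
  -- `φ y = f' b * y + K (b - y)² / 2 - f y` is antitone: `f' b - f' x ≤ K (b - x)` by the
  -- first-order bound for `f'`.
  have hφ : ∀ x ∈ Icc a b, HasDerivAt (fun y ↦ f' b * y + K * (b - y) ^ 2 / 2 - f y)
      (f' b - K * (b - x) - f' x) x := by
    intro x hx
    have := (((hasDerivAt_id x).const_mul (f' b)).add
      ((((hasDerivAt_id x).const_sub b).pow 2).const_mul K |>.div_const 2)).sub (hf x hx)
    refine this.congr_deriv ?_
    simp only [id]
    ring
  have hslope : ∀ x ∈ Icc a b, f' b - K * (b - x) - f' x ≤ 0 := by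
    intro x hx
    have := image_sub_le_mul_sub_of_hasDerivAt_le hx.2
      (fun y hy ↦ hf' y ⟨hx.1.trans hy.1, hy.2⟩) (fun y hy ↦ hK y ⟨hx.1.trans hy.1, hy.2⟩)
    linarith
  have := image_sub_le_mul_sub_of_hasDerivAt_le hab hφ hslope
  simp only [sub_self] at this
  linarith

theorem ProbabilityTheory.iIndepFun.measureReal_sum_le_le_exp {Ω ι : Type*} [MeasurableSpace Ω]
    {P : Measure Ω} {X : ι → Ω → ℝ} (hmeas : ∀ i, Measurable (X i)) (hindep : iIndepFun X P)
    {s L : ℝ} (hs : s ≤ 0) (hL : ∀ i, mgf (X i) P s = exp L) (I : Finset ι) (ε : ℝ) :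
    P.real {ω | ∑ i ∈ I, X i ω ≤ ε} ≤ exp (-s * ε + I.card * L) := by
  have := hindep.isProbabilityMeasure
  have hint : ∀ i ∈ I, Integrable (fun ω ↦ exp (s * X i ω)) P :=
    fun i _ ↦ mgf_pos_iff.1 ((hL i).symm ▸ exp_pos L)
  have hchernoff := measure_le_le_exp_mul_mgf ε hs (hindep.integrable_exp_mul_sum hmeas hint)
  rw [hindep.mgf_sum hmeas, Finset.prod_congr rfl (fun i _ ↦ hL i), Finset.prod_const,
    ← exp_nat_mul, ← exp_add] at hchernoff
  simpa only [Finset.sum_apply] using hchernoff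

theorem tilted_chernoff_exponent_le {μ K b c r L t : ℝ} (hμ : 0 < μ) (hK : 0 < K) (hb : 0 < b)
    (hc : 0 ≤ c) (hr : r = μ ^ 2 * c / (2 * √b * K)) (hrK : μ * r / 2 ≤ μ * r - K * r ^ 2 / 2)
    (hL : L ≤ -(μ * r) + K * r ^ 2 / 2) (ht : b / μ + √b * c ≤ t) :
    r * b + t * L ≤ -(μ ^ 3 * c ^ 2) / (8 * K) := by
  have hsb : 0 < √b := sqrt_pos.2 hb
  have hr0 : 0 ≤ r := hr ▸ by positivity
  have hL' : L ≤ -(μ * r / 2) := by linarith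
  have hexp : r * b + (b / μ) * (-(μ * r) + K * r ^ 2 / 2) + (√b * c) * (-(μ * r / 2))
      = -(μ ^ 3 * c ^ 2) / (8 * K) := by
    set u := √b
    have hb' : b = u * u := (mul_self_sqrt hb.le).symm
    rw [hr, hb']
    field_simp
    ring
  have h1 : t * L ≤ (b / μ + √b * c) * L := mul_le_mul_of_nonpos_right ht (by nlinarith)
  have h2 : (b / μ) * L ≤ (b / μ) * (-(μ * r) + K * r ^ 2 / 2) :=
    mul_le_mul_of_nonneg_left hL (by positivity)
  have h3 : (√b * c) * L ≤ (√b * c) * (-(μ * r / 2)) :=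
    mul_le_mul_of_nonneg_left hL' (by positivity)
  linarith

theorem stmt11_general {Ω : Type*} [MeasurableSpace Ω] (P : Measure Ω) [IsProbabilityMeasure P]
    (Θ : Set ℝ)
    (Ψ Ψ' Ψ'' : ℝ → ℝ) (μ₁ θ₁ b : ℝ) (h : ℝ → ℝ)
    (hsub : Set.Icc 0 θ₁ ⊆ Θ)
    (hderiv1 : ∀ θ ∈ Θ, HasDerivAt Ψ (Ψ' θ) θ)
    (hderiv2 : ∀ θ ∈ Θ, HasDerivAt Ψ' (Ψ'' θ) θ)
    (hcont : ContinuousOn Ψ'' (Set.Icc 0 θ₁))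
    (hΨθ₁ : Ψ θ₁ = 0) (hΨ'θ₁ : Ψ' θ₁ = μ₁) (hμ₁ : 0 < μ₁)
    (hb : 0 < b) (hhb : 0 < h b)
    (K : ℝ) (hK : K = sSup (Ψ'' '' Set.Icc 0 θ₁)) (hKpos : 0 < K)
    (r : ℝ) (hr : r = μ₁ ^ 2 * h b / (2 * Real.sqrt b * K))
    (hrθ₁ : r < θ₁) (hr2 : μ₁ * r / 2 ≤ μ₁ * r - K * r ^ 2 / 2)
    (t : ℕ) (ht : t = ⌈b / μ₁ + Real.sqrt b * h b⌉₊)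
    (X : ℕ → Ω → ℝ)
    (hmeas : ∀ i, Measurable (X i))
    (hindep : iIndepFun X P)
    (hmgf : ∀ i, ∀ s : ℝ, θ₁ + s ∈ Θ → mgf (X i) P s = exp (Ψ (θ₁ + s) - Ψ θ₁))
    (S : ℕ → Ω → ℝ) (hS : ∀ n ω, S n ω = ∑ k ∈ Finset.range n, X k ω) :
    (P {ω | ∀ n : ℕ, 1 ≤ n → n ≤ t → S n ω ∈ Set.Ico 0 b}).toReal ≤
      exp (-(μ₁ ^ 3 * (h b) ^ 2) / (8 * K)) := by
  have hr0 : 0 ≤ r := hr ▸ by positivity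
  have hIcc : Icc (θ₁ - r) θ₁ ⊆ Icc 0 θ₁ := Icc_subset_Icc_left (by linarith)
  have hΨ''K : ∀ x ∈ Icc (θ₁ - r) θ₁, Ψ'' x ≤ K := fun x hx ↦ hK ▸
    le_csSup (isCompact_Icc.bddAbove_image hcont) (mem_image_of_mem _ (hIcc hx))
  have htaylor := mul_sub_sub_sq_le_image_sub_of_hasDerivAt (sub_le_self θ₁ hr0)
    (fun x hx ↦ hderiv1 x (hsub (hIcc hx))) (fun x hx ↦ hderiv2 x (hsub (hIcc hx))) hΨ''K
  rw [sub_sub_cancel, hΨθ₁, hΨ'θ₁] at htaylor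
  have hmgf_r : ∀ i, mgf (X i) P (-r) = exp (Ψ (θ₁ - r)) := fun i ↦ by
    rw [hmgf i (-r) (hsub (hIcc (left_mem_Icc.2 (sub_le_self θ₁ hr0)))), hΨθ₁, sub_zero,
      sub_eq_add_neg]
  have ht_ge : b / μ₁ + √b * h b ≤ t := ht ▸ Nat.le_ceil _
  have ht_pos : 1 ≤ t := by
    rw [ht, Nat.one_le_ceil_iff]
    positivity
  have hevent : {ω | ∀ n : ℕ, 1 ≤ n → n ≤ t → S n ω ∈ Ico 0 b} ⊆
      {ω | ∑ k ∈ Finset.range t, X k ω ≤ b} := fun ω hω ↦ by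
    change _ ≤ b
    rw [← hS]
    exact (hω t ht_pos le_rfl).2.le
  calc (P _).toReal ≤ P.real {ω | ∑ k ∈ Finset.range t, X k ω ≤ b} :=
        measureReal_mono hevent
    _ ≤ exp (-(-r) * b + (Finset.range t).card * Ψ (θ₁ - r)) :=
      hindep.measureReal_sum_le_le_exp hmeas (neg_nonpos.2 hr0) hmgf_r _ b
    _ ≤ _ := by
      rw [neg_neg, Finset.card_range]
      exact exp_le_exp.2
        (tilted_chernoff_exponent_le hμ₁ hKpos hb hhb.le hr hr2 (by linarith) ht_ge)

/-- Lemma 3.3: Under the tilted measure P_{θ₁} (X i.i.d. with mean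
μ₁ = Ψ'(θ₁) > 0 and cumulant generating function θ ↦ Ψ(θ₁+θ) − Ψ(θ₁)), with
t = ⌈b/μ₁ + √b·h(b)⌉ and T_b the first exit time of S from [0,b): if
r = μ₁²h(b)/(2√b·K) (K = sup_{0≤θ≤θ₁} Ψ'') satisfies r < θ₁ and
μ₁r − Kr²/2 ≥ μ₁r/2, then P_{θ₁}(T_b > t) ≤ exp(−μ₁³h(b)²/(8K)). -/
theorem stmt11 {Ω : Type*} [MeasurableSpace Ω] (P : Measure Ω) [IsProbabilityMeasure P]
    (Θ : Set ℝ) (hopen : IsOpen Θ) (hconv : Convex ℝ Θ)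
    (Ψ Ψ' Ψ'' : ℝ → ℝ) (μ₀ μ₁ θ₁ b : ℝ) (h : ℝ → ℝ)
    (hsub : Set.Icc 0 θ₁ ⊆ Θ)
    (hderiv1 : ∀ θ ∈ Θ, HasDerivAt Ψ (Ψ' θ) θ)
    (hderiv2 : ∀ θ ∈ Θ, HasDerivAt Ψ' (Ψ'' θ) θ)
    (hpos : ∀ θ ∈ Θ, 0 < Ψ'' θ)
    (hcont : ContinuousOn Ψ'' (Set.Icc 0 θ₁))
    (hΨ0 : Ψ 0 = 0) (hΨ'0 : Ψ' 0 = μ₀) (hμ₀ : μ₀ < 0)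
    (hθ₁ : 0 < θ₁) (hΨθ₁ : Ψ θ₁ = 0) (hΨ'θ₁ : Ψ' θ₁ = μ₁) (hμ₁ : 0 < μ₁)
    (hb : 0 < b) (hhb : 0 < h b)
    (K : ℝ) (hK : K = sSup (Ψ'' '' Set.Icc 0 θ₁)) (hKpos : 0 < K)
    (r : ℝ) (hr : r = μ₁ ^ 2 * h b / (2 * Real.sqrt b * K))
    (hrθ₁ : r < θ₁) (hr2 : μ₁ * r / 2 ≤ μ₁ * r - K * r ^ 2 / 2)
    (t : ℕ) (ht : t = ⌈b / μ₁ + Real.sqrt b * h b⌉₊)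
    (X : ℕ → Ω → ℝ)
    (hmeas : ∀ i, Measurable (X i))
    (hindep : iIndepFun X P)
    (hident : ∀ i, Measure.map (X i) P = Measure.map (X 0) P)
    (hmgf : ∀ i, ∀ s : ℝ, θ₁ + s ∈ Θ → mgf (X i) P s = exp (Ψ (θ₁ + s) - Ψ θ₁))
    (S : ℕ → Ω → ℝ) (hS : ∀ n ω, S n ω = ∑ k ∈ Finset.range n, X k ω) :
    (P {ω | ∀ n : ℕ, 1 ≤ n → n ≤ t → S n ω ∈ Set.Ico 0 b}).toReal ≤
      exp (-(μ₁ ^ 3 * (h b) ^ 2) / (8 * K)) :=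
  stmt11_general P Θ Ψ Ψ' Ψ'' μ₁ θ₁ b h hsub hderiv1 hderiv2 hcont hΨθ₁ hΨ'θ₁ hμ₁ hb hhb K hK hKpos
    r hr hrθ₁ hr2 t ht X hmeas hindep hmgf S hS
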